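/- Let Λ := MvPolynomial ℕ+ ℚ with variables p_i, and for a permutation σ of a finite set define p_{cycleType(σ)} := ∏ p_ℓ over the multiset of cycle lengths ℓ of σ (fixed points contributing p_1). For n ≥ 0 define ch_n from ℚ-valued class functions on S_n to Λ by ch_n(φ) = (1/n!) Σ_{σ ∈ S_n} φ(σ) · p_{cycleType(σ)}. Fix 0 ≤ k ≤ n, and identify S_k × S_{n−k} with a subgroup H of S_n via the standard decomposition Fin n ≃ Fin k ⊕ Fin (n−k). Given class functions φ on S_k and ψ on S_{n−k}, define the induced class function Ind(φ ⊠ ψ) on S_n by Ind(φ ⊠ ψ)(σ) = (1/(k!·(n−k)!)) Σ_{g ∈ S_n, gσg^{-1} ∈ H} φ(π_1(gσg^{-1}))·ψ(π_2(gσg^{-1})), where π_1, π_2 are the projections of H ≅ S_k × S_{n−k} to its factors. Then ch_n(Ind(φ ⊠ ψ)) = ch_k(φ) · ch_{n−k}(ψ) in Λ. -/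

import Mathlib

open Equiv Finset

/-- The ring of symmetric functions, presented as the polynomial ring `ℚ[p₁, p₂, …]`
on the power sum variables `p_i` indexed by positive integers. -/
abbrev Lambda : Type := MvPolynomial ℕ+ ℚ

/-- The power sum variable `p_ℓ` for `ℓ > 0` (by convention `1` for `ℓ = 0`,
a case that never occurs for cycle lengths). -/
noncomputable def pVar (ℓ : ℕ) : Lambda :=
  if h : 0 < ℓ then MvPolynomial.X ⟨ℓ, h⟩ else 1

/-- For a permutation `σ` of a finite set, the product `p_{cycleType(σ)} = ∏ p_ℓ` over
the multiset of cycle lengths `ℓ` of `σ`, fixed points contributing factors `p_1`. -/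
noncomputable def pCycleType {α : Type*} [Fintype α] [DecidableEq α] (σ : Perm α) :
    Lambda :=
  ((σ.cycleType + Multiset.replicate (Fintype.card α - σ.support.card) 1).map pVar).prod

/-- The Frobenius characteristic of a `ℚ`-valued (class) function on `S_n`:
`ch_n(φ) = (1/n!) Σ_{σ ∈ S_n} φ(σ) · p_{cycleType(σ)}`. -/
noncomputable def frobeniusChar (n : ℕ) (φ : Perm (Fin n) → ℚ) : Lambda :=
  ((n.factorial : ℚ)⁻¹) • ∑ σ : Perm (Fin n), φ σ • pCycleType σ

/-- The standard identification `Fin k ⊕ Fin (n − k) ≃ Fin n` for `k ≤ n`. -/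
def sumEquiv {k n : ℕ} (h : k ≤ n) : (Fin k ⊕ Fin (n - k)) ≃ Fin n :=
  finSumFinEquiv.trans (finCongr (Nat.add_sub_cancel' h))

/-- The embedding of `S_k × S_{n−k}` into `S_n` along `Fin k ⊕ Fin (n−k) ≃ Fin n`;
its image is the subgroup `H`. -/
def blockEmbed {k n : ℕ} (h : k ≤ n) (p : Perm (Fin k) × Perm (Fin (n - k))) :
    Perm (Fin n) :=
  (sumEquiv h).permCongr (Equiv.sumCongr p.1 p.2)

/-- The induced class function `Ind(φ ⊠ ψ)` on `S_n`, for class functions `φ` on `S_k`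
and `ψ` on `S_{n−k}`:
`Ind(φ ⊠ ψ)(σ) = (1/(k!·(n−k)!)) Σ_{g ∈ S_n, gσg⁻¹ ∈ H} φ(π₁(gσg⁻¹))·ψ(π₂(gσg⁻¹))`,
where the inner sums pick out the (unique, when it exists) pair `(α, β)` with
`gσg⁻¹ = blockEmbed h (α, β)`. -/
noncomputable def inducedFun {k n : ℕ} (h : k ≤ n)
    (φ : Perm (Fin k) → ℚ) (ψ : Perm (Fin (n - k)) → ℚ) (σ : Perm (Fin n)) : ℚ :=
  ((k.factorial * (n - k).factorial : ℕ) : ℚ)⁻¹ *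
    ∑ g : Perm (Fin n), ∑ α : Perm (Fin k), ∑ β : Perm (Fin (n - k)),
      if g * σ * g⁻¹ = blockEmbed h (α, β) then φ α * ψ β else 0


section AuxPermCongr

open Equiv.Perm

/-- `permCongr` as a multiplicative equivalence. -/
def permCongrMulEquiv {α β : Type*} (e : α ≃ β) : Perm α ≃* Perm β :=
  { e.permCongr with map_mul' := fun a b => by ext x; simp }

lemma permCongr_zpow' {α β : Type*} (e : α ≃ β) (σ : Perm α) (i : ℤ) :
    e.permCongr (σ ^ i) = (e.permCongr σ) ^ i :=
  map_zpow (permCongrMulEquiv e) σ i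

lemma isCycle_permCongr {α β : Type*} (e : α ≃ β) {σ : Perm α} (hσ : σ.IsCycle) :
    (e.permCongr σ).IsCycle := by
  obtain ⟨x, hx, hsc⟩ := hσ
  refine ⟨e x, by simpa using fun hc => hx (e.injective hc), fun y hy => ?_⟩
  have hy' : σ (e.symm y) ≠ e.symm y := by
    intro hc
    apply hy
    simp [Equiv.permCongr_apply, hc]
  obtain ⟨i, hi⟩ := hsc hy'
  exact ⟨i, by rw [← permCongr_zpow']; simp [Equiv.permCongr_apply, hi]⟩

lemma disjoint_permCongr {α β : Type*} (e : α ≃ β) {σ τ : Perm α} (h : σ.Disjoint τ) :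
    (e.permCongr σ).Disjoint (e.permCongr τ) := by
  intro x
  rcases h (e.symm x) with h1 | h1 <;> [left; right] <;>
    simp [Equiv.permCongr_apply, h1]

variable {α β : Type*} [Fintype α] [DecidableEq α] [Fintype β] [DecidableEq β]

lemma support_permCongr (e : α ≃ β) (σ : Perm α) :
    (e.permCongr σ).support = σ.support.map e.toEmbedding := by
  ext b
  simp only [Equiv.Perm.mem_support, Finset.mem_map_equiv, Equiv.permCongr_apply]
  constructor
  · intro hb hc; exact hb (by rw [hc]; simp)
  · intro hb hc; exact hb (by simpa using congrArg e.symm hc)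

lemma cycleType_permCongr' (e : α ≃ β) (σ : Perm α) :
    (e.permCongr σ).cycleType = σ.cycleType := by
  induction σ using Equiv.Perm.cycle_induction_on with
  | base_one =>
      have h1 : e.permCongr (1 : Perm α) = 1 := by ext x; simp
      rw [h1, cycleType_one, cycleType_one]
  | base_cycles σ hσ =>
      rw [hσ.cycleType, (isCycle_permCongr e hσ).cycleType, support_permCongr,
        Finset.card_map]
  | induction_disjoint σ τ hd hc hσ hτ =>
      have hm : e.permCongr (σ * τ) = e.permCongr σ * e.permCongr τ := by ext x; simp
      rw [hm, (disjoint_permCongr e hd).cycleType_mul, hd.cycleType_mul, hσ, hτ]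

/-- `α` is equivalent to the left summands of `α ⊕ β`. -/
def sumLeftEquiv : α ≃ {x : α ⊕ β // x.isLeft = true} where
  toFun a := ⟨.inl a, rfl⟩
  invFun x := x.1.getLeft x.2
  left_inv a := rfl
  right_inv x := by rcases x with ⟨x | x, hx⟩ <;> simp at hx ⊢

/-- `β` is equivalent to the right summands of `α ⊕ β`. -/
def sumRightEquiv : β ≃ {x : α ⊕ β // x.isRight = true} where
  toFun b := ⟨.inr b, rfl⟩
  invFun x := x.1.getRight x.2
  left_inv b := rfl
  right_inv x := by rcases x with ⟨x | x, hx⟩ <;> simp at hx ⊢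

omit [Fintype α] [DecidableEq α] [Fintype β] [DecidableEq β] in
lemma sumCongr_one_right (σ : Perm α) :
    Equiv.sumCongr σ (1 : Perm β) = σ.extendDomain (sumLeftEquiv (β := β)) := by
  ext x
  rcases x with a | b
  · rw [show (Sum.inl a : α ⊕ β) = ((sumLeftEquiv a : {x : α ⊕ β // x.isLeft = true}) : α ⊕ β)
      from rfl, Perm.extendDomain_apply_image]
    rfl
  · rw [Perm.extendDomain_apply_not_subtype σ (sumLeftEquiv (β := β)) (by simp)]
    rfl

omit [Fintype α] [DecidableEq α] [Fintype β] [DecidableEq β] in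
lemma sumCongr_one_left (τ : Perm β) :
    Equiv.sumCongr (1 : Perm α) τ = τ.extendDomain (sumRightEquiv (α := α)) := by
  ext x
  rcases x with a | b
  · rw [Perm.extendDomain_apply_not_subtype τ (sumRightEquiv (α := α)) (by simp)]
    rfl
  · rw [show (Sum.inr b : α ⊕ β) = ((sumRightEquiv b : {x : α ⊕ β // x.isRight = true}) : α ⊕ β)
      from rfl, Perm.extendDomain_apply_image]
    rfl

lemma cycleType_sumCongr' (σ : Perm α) (τ : Perm β) :
    Equiv.Perm.cycleType (Equiv.sumCongr σ τ) = σ.cycleType + τ.cycleType := by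
  have hmul : Equiv.sumCongr σ τ = Equiv.sumCongr σ (1 : Perm β) *
      Equiv.sumCongr (1 : Perm α) τ := by
    rw [Equiv.Perm.sumCongr_mul, mul_one, one_mul]
  have hd : Equiv.Perm.Disjoint (Equiv.sumCongr σ (1 : Perm β))
      (Equiv.sumCongr (1 : Perm α) τ) := by
    intro x
    rcases x with a | b
    · right; rfl
    · left; rfl
  rw [hmul, hd.cycleType_mul, sumCongr_one_right, sumCongr_one_left,
    cycleType_extendDomain, cycleType_extendDomain]

end AuxPermCongr

lemma pCycleType_eq {α : Type*} [Fintype α] [DecidableEq α] (σ : Perm α) :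
    pCycleType σ =
      (σ.cycleType.map pVar).prod * pVar 1 ^ (Fintype.card α - σ.cycleType.sum) := by
  unfold pCycleType
  rw [Multiset.map_add, Multiset.prod_add, Multiset.map_replicate, Multiset.prod_replicate,
    Equiv.Perm.sum_cycleType]

lemma pCycleType_conj {n : ℕ} (g σ : Perm (Fin n)) :
    pCycleType (g * σ * g⁻¹) = pCycleType σ := by
  rw [pCycleType_eq, pCycleType_eq, Equiv.Perm.cycleType_conj]

lemma pCycleType_blockEmbed {k n : ℕ} (h : k ≤ n)
    (α : Perm (Fin k)) (β : Perm (Fin (n - k))) :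
    pCycleType (blockEmbed h (α, β)) = pCycleType α * pCycleType β := by
  have hct : (blockEmbed h (α, β)).cycleType = α.cycleType + β.cycleType := by
    rw [blockEmbed, cycleType_permCongr', cycleType_sumCongr']
  have ha : α.cycleType.sum ≤ k := by
    rw [Equiv.Perm.sum_cycleType]
    simpa using Finset.card_le_univ α.support
  have hb : β.cycleType.sum ≤ n - k := by
    rw [Equiv.Perm.sum_cycleType]
    simpa using Finset.card_le_univ β.support
  have hcard : Fintype.card (Fin n) - (α.cycleType.sum + β.cycleType.sum)
      = (Fintype.card (Fin k) - α.cycleType.sum)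
        + (Fintype.card (Fin (n - k)) - β.cycleType.sum) := by
    simp only [Fintype.card_fin]
    omega
  rw [pCycleType_eq, pCycleType_eq, pCycleType_eq, hct, Multiset.map_add, Multiset.prod_add,
    Multiset.sum_add, hcard, pow_add]
  ring


/-- Multiplicativity of the Frobenius characteristic with respect to the induction
product: for `0 ≤ k ≤ n` and class functions `φ` on `S_k` and `ψ` on `S_{n−k}`,
`ch_n(Ind(φ ⊠ ψ)) = ch_k(φ) · ch_{n−k}(ψ)` in `Λ = ℚ[p₁, p₂, …]`. -/
theorem frobeniusChar_induced {k n : ℕ} (h : k ≤ n)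
    (φ : Perm (Fin k) → ℚ) (ψ : Perm (Fin (n - k)) → ℚ)
    (hφ : ∀ g x : Perm (Fin k), φ (g * x * g⁻¹) = φ x)
    (hψ : ∀ g x : Perm (Fin (n - k)), ψ (g * x * g⁻¹) = ψ x) :
    frobeniusChar n (inducedFun h φ ψ) = frobeniusChar k φ * frobeniusChar (n - k) ψ := by
  classical
  set T : Lambda := ∑ α : Perm (Fin k), ∑ β : Perm (Fin (n - k)),
    (φ α * ψ β) • (pCycleType α * pCycleType β) with hT
  set C : ℚ := ((k.factorial * (n - k).factorial : ℕ) : ℚ) with hC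
  have step1 : ∑ σ : Perm (Fin n), inducedFun h φ ψ σ • pCycleType σ
      = C⁻¹ • ((Nat.factorial n : ℚ) • T) := by
    have hterm : ∀ σ : Perm (Fin n), inducedFun h φ ψ σ • pCycleType σ
        = C⁻¹ • ∑ g : Perm (Fin n), ∑ α : Perm (Fin k), ∑ β : Perm (Fin (n - k)),
          (if σ = g⁻¹ * blockEmbed h (α, β) * g then
            (φ α * ψ β) • (pCycleType α * pCycleType β) else 0) := by
      intro σ
      rw [inducedFun, mul_smul]
      congr 1
      rw [Finset.sum_smul]
      refine Finset.sum_congr rfl fun g _ => ?_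
      rw [Finset.sum_smul]
      refine Finset.sum_congr rfl fun α _ => ?_
      rw [Finset.sum_smul]
      refine Finset.sum_congr rfl fun β _ => ?_
      rw [ite_smul, zero_smul]
      by_cases hc : g * σ * g⁻¹ = blockEmbed h (α, β)
      · have hσ' : σ = g⁻¹ * blockEmbed h (α, β) * g := by
          rw [← hc]; group
        rw [if_pos hc, if_pos hσ']
        congr 1
        rw [← pCycleType_conj g σ, hc, pCycleType_blockEmbed]
      · have hσ' : ¬ σ = g⁻¹ * blockEmbed h (α, β) * g := by
          intro hh
          exact hc (by rw [hh]; group)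
        rw [if_neg hc, if_neg hσ']
    rw [Finset.sum_congr rfl fun σ _ => hterm σ, ← Finset.smul_sum]
    congr 1
    rw [Finset.sum_comm]
    have hg : ∀ g : Perm (Fin n),
        (∑ σ : Perm (Fin n), ∑ α : Perm (Fin k), ∑ β : Perm (Fin (n - k)),
          (if σ = g⁻¹ * blockEmbed h (α, β) * g then
            (φ α * ψ β) • (pCycleType α * pCycleType β) else 0)) = T := by
      intro g
      rw [Finset.sum_comm]
      refine Finset.sum_congr rfl fun α _ => ?_
      rw [Finset.sum_comm]
      refine Finset.sum_congr rfl fun β _ => ?_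
      simp [Finset.sum_ite_eq']
    rw [Finset.sum_congr rfl fun g _ => hg g, Finset.sum_const, Finset.card_univ,
      Fintype.card_perm, Fintype.card_fin, ← Nat.cast_smul_eq_nsmul ℚ]
  have step2 : frobeniusChar k φ * frobeniusChar (n - k) ψ
      = ((k.factorial : ℚ)⁻¹ * ((n - k).factorial : ℚ)⁻¹) • T := by
    rw [frobeniusChar, frobeniusChar, smul_mul_smul_comm, Finset.sum_mul_sum]
    refine congrArg (_ • ·) ?_
    refine Finset.sum_congr rfl fun α _ => Finset.sum_congr rfl fun β _ => ?_
    rw [smul_mul_smul_comm]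
  rw [frobeniusChar, step1, step2, smul_smul, smul_smul]
  congr 1
  have h1 : (n.factorial : ℚ) ≠ 0 := Nat.cast_ne_zero.mpr (Nat.factorial_ne_zero n)
  have h2 : (k.factorial : ℚ) ≠ 0 := Nat.cast_ne_zero.mpr (Nat.factorial_ne_zero k)
  have h3 : ((n - k).factorial : ℚ) ≠ 0 := Nat.cast_ne_zero.mpr (Nat.factorial_ne_zero _)
  rw [hC]
  push_cast
  field_simp
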